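/- For every formula A, the sequent □(□(A → □A) → A) ⇒ A is provable in the cut-free non-well-founded calculus Grz∞. -/

import Mathlib

/-- Modal formulas of the Grzegorczyk logic: ⊥, atoms, →, □. -/
inductive Formula : Type
  | bot : Formula
  | atom : ℕ → Formula
  | imp : Formula → Formula → Formula
  | box : Formula → Formula
deriving DecidableEq

/-- A sequent Γ ⇒ Δ is a pair of finite multisets of formulas. -/
abbrev Sequent : Type := Multiset Formula × Multiset Formula

/-- Names of the inference rules of Grz∞ + cut (including the two kinds of initial sequents). -/
inductive Rule : Type
  | ax | axBot | impL | impR | refl | box | cut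
deriving DecidableEq

/-- □Π for a multiset Π. -/
def boxed (P : Multiset Formula) : Multiset Formula := P.map Formula.box

/-- `Inst r s p₁ p₂` : the rule `r` has a (correct) instance with conclusion `s`,
first premise `p₁` and second premise `p₂` (`none` = no such premise). -/
inductive Inst : Rule → Sequent → Option Sequent → Option Sequent → Prop
  | ax (Γ Δ : Multiset Formula) (p : ℕ) :
      Inst .ax (Formula.atom p ::ₘ Γ, Formula.atom p ::ₘ Δ) none none
  | axBot (Γ Δ : Multiset Formula) :
      Inst .axBot (Formula.bot ::ₘ Γ, Δ) none none
  | impL (Γ Δ : Multiset Formula) (A B : Formula) :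
      Inst .impL (Formula.imp A B ::ₘ Γ, Δ) (some (B ::ₘ Γ, Δ)) (some (Γ, A ::ₘ Δ))
  | impR (Γ Δ : Multiset Formula) (A B : Formula) :
      Inst .impR (Γ, Formula.imp A B ::ₘ Δ) (some (A ::ₘ Γ, B ::ₘ Δ)) none
  | refl (Γ Δ : Multiset Formula) (A : Formula) :
      Inst .refl (Formula.box A ::ₘ Γ, Δ) (some (A ::ₘ Formula.box A ::ₘ Γ, Δ)) none
  | box (Γ Δ : Multiset Formula) (A : Formula) (P : Multiset Formula) :
      Inst .box (Γ + boxed P, Formula.box A ::ₘ Δ) (some (Γ + boxed P, A ::ₘ Δ))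
        (some (boxed P, {A}))
  | cut (Γ Δ : Multiset Formula) (A : Formula) :
      Inst .cut (Γ, Δ) (some (Γ, A ::ₘ Δ)) (some (A ::ₘ Γ, Δ))

/-- A labelling of tree addresses (lists of booleans; `true` = second/right child)
by a rule name together with a sequent; `none` means the address is outside the tree. -/
abbrev Lab : Type := List Bool → Option (Rule × Sequent)

/-- The labelling of the subtree at child `i`. -/
def shift (i : Bool) (l : Lab) : Lab := fun a => l (i :: a)

/-- An ∞-proof in Grz∞ + cut: a possibly infinite tree of sequents built according to
the rules, in which every infinite branch passes through the right premise of the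
rule (□) infinitely many times. -/
structure InfProof : Type where
  lab : Lab
  root_some : (lab []).isSome
  nojunk : ∀ (a : List Bool) (i : Bool), lab a = none → lab (a ++ [i]) = none
  step : ∀ (a : List Bool) (r : Rule) (s : Sequent), lab a = some (r, s) →
      Inst r s ((lab (a ++ [false])).map Prod.snd) ((lab (a ++ [true])).map Prod.snd)
  branch : ∀ f : ℕ → Bool, (∀ n : ℕ, (lab ((List.range n).map f)).isSome) →
      ∀ N : ℕ, ∃ n : ℕ, N ≤ n ∧ f n = true ∧
        (lab ((List.range n).map f)).map Prod.fst = some Rule.box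

/-- The sequent at the root of an ∞-proof. -/
def rootSeq (π : InfProof) : Sequent := ((π.lab []).map Prod.snd).getD (0, 0)

/-- `Proves π S` : the ∞-proof `π` is an ∞-proof of the sequent `S`. -/
def Proves (π : InfProof) (S : Sequent) : Prop := ∃ r : Rule, π.lab [] = some (r, S)

/-- An ∞-proof contains no application of the cut rule (i.e. it is a proof of Grz∞). -/
def NoCut (π : InfProof) : Prop := ∀ (a : List Bool) (r : Rule) (s : Sequent),
  π.lab a = some (r, s) → r ≠ Rule.cut

/-- Membership of an address in the main fragment: no proper passage through a
right premise of (□) strictly below it. -/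
def InMain (l : Lab) (a : List Bool) : Prop :=
  (l a).isSome ∧ ∀ (b c : List Bool), a = b ++ true :: c →
    (l b).map Prod.fst = some Rule.box → c = []

/-- The local height |π| : the length of the longest branch in the main fragment. -/
noncomputable def height (l : Lab) : ℕ := sSup {n : ℕ | ∃ a : List Bool, InMain l a ∧ a.length = n}

/-- The relations ∼ₙ on ∞-proofs (presented on labellings), defined inductively:
π ∼₀ τ always; a single-node proof is ∼ₙ-related to itself; proofs ending in the same
instance of (→L), (cut), (→R), (refl) are ∼ₙ-related when their immediate subproofs are;
proofs ending in the same instance of (□) are ∼ₙ₊₁-related when the left-premise subproofs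
are ∼ₙ₊₁-related and the right-premise subproofs are ∼ₙ-related. -/
inductive Sim : ℕ → Lab → Lab → Prop
  | zero (l m : Lab) : Sim 0 l m
  | leaf (n : ℕ) (l : Lab) : height l = 0 → Sim n l l
  | bin (n : ℕ) (l m : Lab) (r : Rule) (s : Sequent) :
      (r = Rule.impL ∨ r = Rule.cut) →
      l [] = some (r, s) → m [] = some (r, s) →
      (l [false]).map Prod.snd = (m [false]).map Prod.snd →
      (l [true]).map Prod.snd = (m [true]).map Prod.snd →
      Sim n (shift false l) (shift false m) → Sim n (shift true l) (shift true m) →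
      Sim n l m
  | un (n : ℕ) (l m : Lab) (r : Rule) (s : Sequent) :
      (r = Rule.impR ∨ r = Rule.refl) →
      l [] = some (r, s) → m [] = some (r, s) →
      (l [false]).map Prod.snd = (m [false]).map Prod.snd →
      Sim n (shift false l) (shift false m) →
      Sim n l m
  | box (n : ℕ) (l m : Lab) (s : Sequent) :
      l [] = some (Rule.box, s) → m [] = some (Rule.box, s) →
      (l [false]).map Prod.snd = (m [false]).map Prod.snd →
      (l [true]).map Prod.snd = (m [true]).map Prod.snd →
      Sim (n + 1) (shift false l) (shift false m) → Sim n (shift true l) (shift true m) →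
      Sim (n + 1) l m

/-- The sets 𝒫ₙ of ∞-proofs (presented on labellings), defined inductively:
𝒫₀ is everything; single-node proofs are in every 𝒫ₙ; (→L), (→R), (refl) preserve
membership in 𝒫ₙ; a proof ending in (□) with left-premise subproof in 𝒫ₙ₊₁ and
right-premise subproof in 𝒫ₙ is in 𝒫ₙ₊₁. -/
inductive MemP : ℕ → Lab → Prop
  | zero (l : Lab) : MemP 0 l
  | leaf (n : ℕ) (l : Lab) : height l = 0 → MemP n l
  | bin (n : ℕ) (l : Lab) (s : Sequent) :
      l [] = some (Rule.impL, s) →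
      MemP n (shift false l) → MemP n (shift true l) → MemP n l
  | un (n : ℕ) (l : Lab) (r : Rule) (s : Sequent) :
      (r = Rule.impR ∨ r = Rule.refl) →
      l [] = some (r, s) → MemP n (shift false l) → MemP n l
  | box (n : ℕ) (l : Lab) (s : Sequent) :
      l [] = some (Rule.box, s) →
      MemP (n + 1) (shift false l) → MemP n (shift true l) → MemP (n + 1) l

/- The metric d(π,τ) = 2^(−sup{n : π ∼ₙ τ}), with 2^(−∞) = 0. -/
open Classical in
noncomputable def pdist (π τ : InfProof) : ℝ :=
  if ∀ n : ℕ, Sim n π.lab τ.lab then 0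
  else (2 : ℝ) ^ (-((sSup {n : ℕ | Sim n π.lab τ.lab} : ℕ) : ℤ))

/-- A mapping on ∞-proofs is nonexpansive if it preserves all relations ∼ₙ. -/
def Nonexpansive (f : InfProof → InfProof) : Prop :=
  ∀ (n : ℕ) (π τ : InfProof), Sim n π.lab τ.lab → Sim n (f π).lab (f τ).lab

/-- A mapping is adequate if it is nonexpansive, maps 𝒫₁ into 𝒫₁,
and does not increase local height. -/
def Adequate (f : InfProof → InfProof) : Prop :=
  Nonexpansive f ∧ (∀ π : InfProof, MemP 1 π.lab → MemP 1 (f π).lab) ∧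
    ∀ π : InfProof, height (f π).lab ≤ height π.lab

/-- The set 𝒫₁ of ∞-proofs whose main fragment is cut-free, as a subtype. -/
abbrev P1 : Type := {π : InfProof // MemP 1 π.lab}

/-- An A-reducing mapping: a nonexpansive map ℛ : 𝒫₁ × 𝒫₁ → 𝒫₁ such that
ℛ(π′,π″) proves Γ ⇒ Δ whenever π′ proves Γ ⇒ Δ, A and π″ proves A, Γ ⇒ Δ. -/
def Reducing (A : Formula) (R : P1 → P1 → P1) : Prop :=
  (∀ (n : ℕ) (p₁ p₂ q₁ q₂ : P1), Sim n p₁.1.lab q₁.1.lab → Sim n p₂.1.lab q₂.1.lab →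
      Sim n (R p₁ p₂).1.lab (R q₁ q₂).1.lab) ∧
  ∀ (p₁ p₂ : P1) (Γ Δ : Multiset Formula),
    Proves p₁.1 (Γ, A ::ₘ Δ) → Proves p₂.1 (A ::ₘ Γ, Δ) → Proves (R p₁ p₂).1 (Γ, Δ)

/-- A mapping is root-preserving if it maps ∞-proofs to ∞-proofs of the same sequent. -/
def RootPres (f : InfProof → InfProof) : Prop :=
  ∀ (π : InfProof) (S : Sequent), Proves π S → Proves (f π) S

/-- The uniform distance on mappings of ∞-proofs. -/
noncomputable def udist (U V : InfProof → InfProof) : ℝ :=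
  ⨆ π : InfProof, pdist (U π) (V π)

/- The immediate subproof of `π` at child `i` (junk value `π` if there is none). -/
open Classical in
noncomputable def subtree (π : InfProof) (i : Bool) : InfProof :=
  if h : ∃ τ : InfProof, τ.lab = shift i π.lab then h.choose else π

/-- `IsFOp E F` : `F` is the operator ℱ (relative to the one-step cut-elimination map
`E` = ℰ*) defined by: on proofs with cut-free main fragment it commutes with the last
rule, applying `U` at right premises of (□) and fixing single-node proofs; on other
proofs it first applies `E`. -/
def IsFOp (E : InfProof → InfProof) (F : (InfProof → InfProof) → InfProof → InfProof) : Prop :=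
  ∀ (U : InfProof → InfProof) (π : InfProof),
    (MemP 1 π.lab → height π.lab = 0 → F U π = π) ∧
    (∀ (r : Rule) (s : Sequent), MemP 1 π.lab → π.lab [] = some (r, s) →
        r ≠ Rule.box → r ≠ Rule.cut → height π.lab ≠ 0 →
        (F U π).lab [] = some (r, s) ∧
        shift false (F U π).lab = (F U (subtree π false)).lab ∧
        (r = Rule.impL → shift true (F U π).lab = (F U (subtree π true)).lab)) ∧
    (∀ s : Sequent, MemP 1 π.lab → π.lab [] = some (Rule.box, s) →
        (F U π).lab [] = some (Rule.box, s) ∧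
        shift false (F U π).lab = (F U (subtree π false)).lab ∧
        shift true (F U π).lab = (U (subtree π true)).lab) ∧
    (¬ MemP 1 π.lab → F U π = F U (E π))

/-- Membership in 𝒩ₙ : a root-preserving nonexpansive map whose image lies in 𝒫ₙ. -/
def InN (n : ℕ) (U : InfProof → InfProof) : Prop :=
  Nonexpansive U ∧ RootPres U ∧ ∀ π : InfProof, MemP n (U π).lab

/-- The finitary sequent calculus Grz_Seq (with cut allowed iff the flag is `true`). -/
inductive GrzSeq : Bool → Sequent → Prop
  | ax (c : Bool) (Γ Δ : Multiset Formula) (A : Formula) :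
      GrzSeq c (A ::ₘ Γ, A ::ₘ Δ)
  | bot (c : Bool) (Γ Δ : Multiset Formula) :
      GrzSeq c (Formula.bot ::ₘ Γ, Δ)
  | impL (c : Bool) (Γ Δ : Multiset Formula) (A B : Formula) :
      GrzSeq c (B ::ₘ Γ, Δ) → GrzSeq c (Γ, A ::ₘ Δ) →
      GrzSeq c (Formula.imp A B ::ₘ Γ, Δ)
  | impR (c : Bool) (Γ Δ : Multiset Formula) (A B : Formula) :
      GrzSeq c (A ::ₘ Γ, B ::ₘ Δ) → GrzSeq c (Γ, Formula.imp A B ::ₘ Δ)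
  | refl (c : Bool) (Γ Δ : Multiset Formula) (B : Formula) :
      GrzSeq c (B ::ₘ Formula.box B ::ₘ Γ, Δ) → GrzSeq c (Formula.box B ::ₘ Γ, Δ)
  | grz (c : Bool) (Γ Δ : Multiset Formula) (A : Formula) (P : Multiset Formula) :
      GrzSeq c (Formula.box (Formula.imp A (Formula.box A)) ::ₘ boxed P, {A}) →
      GrzSeq c (Γ + boxed P, Formula.box A ::ₘ Δ)
  | cut (Γ Δ : Multiset Formula) (A : Formula) :
      GrzSeq true (Γ, A ::ₘ Δ) → GrzSeq true (A ::ₘ Γ, Δ) → GrzSeq true (Γ, Δ)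

/-!
The sequent has a regular cut-free ∞-proof: a finite derivation some of whose right premises of
(□) are the end-sequent itself, closed by looping back to the root. Unfolding such a cyclic
derivation gives an ∞-proof, and every infinite branch of it takes a loop infinitely often,
because the size of the current subderivation decreases along every other edge.

For `G = □(A → □A) → A`, (refl) on `□G` and (→L) on `G` leave `□G ⇒ □(A → □A), A`.
Both premises of (□) applied to it are `□G ⇒ A → □A` up to the side formula `A`, and (→R)
followed by (□) on `□A` has `□G ⇒ A` as its right premise. The remaining leaves are identity
sequents `C, Γ ⇒ C, Δ`, which have finite cut-free proofs by induction on `C`.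
-/

structure ProofGraph (σ : Type) where
  label : σ → Rule × Sequent
  child : σ → Bool → Option σ
  valid : ∀ t, Inst (label t).1 (label t).2 ((child t false).map fun u => (label u).2)
    ((child t true).map fun u => (label u).2)
  rank : σ → ℕ
  rank_lt : ∀ t i u, child t i = some u →
    ((label t).1 = Rule.box ∧ i = true) ∨ rank u < rank t

namespace ProofGraph

variable {σ : Type} (G : ProofGraph σ)

def walk : List Bool → σ → Option σ
  | [], t => some t
  | i :: a, t => (G.child t i).bind (walk a)

theorem walk_append_singleton (a : List Bool) (i : Bool) (t : σ) :
    G.walk (a ++ [i]) t = (G.walk a t).bind (G.child · i) := by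
  induction a generalizing t with
  | nil => simp [walk]
  | cons j a ih => simp [walk, ih, Option.bind_assoc]

theorem walk_range_succ (f : ℕ → Bool) (n : ℕ) (t : σ) :
    G.walk ((List.range (n + 1)).map f) t =
      (G.walk ((List.range n).map f) t).bind (G.child · (f n)) := by
  rw [List.range_succ, List.map_append, List.map_singleton, walk_append_singleton]

theorem exists_box_right_of_forall_isSome (t : σ) (f : ℕ → Bool)
    (hf : ∀ n, (G.walk ((List.range n).map f) t).isSome) (N : ℕ) :
    ∃ n, N ≤ n ∧ f n = true ∧
      (G.walk ((List.range n).map f) t).map (fun u => (G.label u).1) = some Rule.box := by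
  choose u hu using fun n => Option.isSome_iff_exists.mp (hf n)
  have hchild : ∀ n, G.child (u n) (f n) = some (u (n + 1)) := fun n => by
    simpa [walk_range_succ, hu n] using hu (n + 1)
  by_contra! hnone
  have hlt : ∀ n, G.rank (u (N + n + 1)) < G.rank (u (N + n)) := fun n => by
    refine (G.rank_lt _ _ _ (hchild (N + n))).resolve_left fun ⟨hbox, hright⟩ => ?_
    exact hnone (N + n) (Nat.le_add_right N n) hright (by simp [hu, hbox])
  exact not_strictAnti_of_wellFoundedLT (fun n => G.rank (u (N + n)))
    (strictAnti_nat_of_succ_lt hlt)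

def unfold (t : σ) : InfProof where
  lab a := (G.walk a t).map G.label
  root_some := rfl
  nojunk a i h := by simp_all [walk_append_singleton]
  step a r s h := by
    obtain ⟨u, hu, hlabel⟩ := Option.map_eq_some_iff.mp h
    simpa [walk_append_singleton, hu, Option.map_map, Function.comp_def, hlabel] using G.valid u
  branch f hf N := by
    simpa [Option.map_map, Function.comp_def] using
      G.exists_box_right_of_forall_isSome t f (by simpa using hf) N

theorem unfold_proves (t : σ) : Proves (G.unfold t) (G.label t).2 :=
  ⟨(G.label t).1, rfl⟩

theorem noCut_unfold (h : ∀ t, (G.label t).1 ≠ Rule.cut) (t : σ) : NoCut (G.unfold t) := by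
  intro a r s hlab
  obtain ⟨u, -, hu⟩ := Option.map_eq_some_iff.mp hlab
  simpa [hu] using h u

end ProofGraph

/-- Finite cut-free derivations of `S` in which a right premise of (□) may be left open when it
is the sequent `H`. A derivation `Deriv H H` is a cyclic proof: each open premise loops back to
the root. -/
inductive Deriv (H : Sequent) : Sequent → Type
  | ax (Γ Δ : Multiset Formula) (p : ℕ) :
      Deriv H (Formula.atom p ::ₘ Γ, Formula.atom p ::ₘ Δ)
  | axBot (Γ Δ : Multiset Formula) : Deriv H (Formula.bot ::ₘ Γ, Δ)
  | impL (Γ Δ : Multiset Formula) (A B : Formula) :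
      Deriv H (B ::ₘ Γ, Δ) → Deriv H (Γ, A ::ₘ Δ) →
      Deriv H (Formula.imp A B ::ₘ Γ, Δ)
  | impR (Γ Δ : Multiset Formula) (A B : Formula) :
      Deriv H (A ::ₘ Γ, B ::ₘ Δ) → Deriv H (Γ, Formula.imp A B ::ₘ Δ)
  | refl (Γ Δ : Multiset Formula) (A : Formula) :
      Deriv H (A ::ₘ Formula.box A ::ₘ Γ, Δ) → Deriv H (Formula.box A ::ₘ Γ, Δ)
  | box (Γ Δ : Multiset Formula) (A : Formula) (P : Multiset Formula) :
      Deriv H (Γ + boxed P, A ::ₘ Δ) → Deriv H (boxed P, {A}) →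
      Deriv H (Γ + boxed P, Formula.box A ::ₘ Δ)
  | boxBud (Γ Δ : Multiset Formula) (A : Formula) (P : Multiset Formula) :
      Deriv H (Γ + boxed P, A ::ₘ Δ) → (boxed P, {A}) = H →
      Deriv H (Γ + boxed P, Formula.box A ::ₘ Δ)

namespace Deriv

variable {H : Sequent}

def rule {S : Sequent} : Deriv H S → Rule
  | ax .. => Rule.ax
  | axBot .. => Rule.axBot
  | impL .. => Rule.impL
  | impR .. => Rule.impR
  | refl .. => Rule.refl
  | box .. | boxBud .. => Rule.box

def size {S : Sequent} : Deriv H S → ℕ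
  | ax .. | axBot .. => 0
  | impL _ _ _ _ d e | box _ _ _ _ d e => d.size + e.size + 1
  | impR _ _ _ _ d | refl _ _ _ d | boxBud _ _ _ _ d _ => d.size + 1

def child (root : Deriv H H) {S : Sequent} : Deriv H S → Bool → Option (Σ S, Deriv H S)
  | impL _ _ _ _ d _, false | impR _ _ _ _ d, false | refl _ _ _ d, false
  | box _ _ _ _ d _, false | boxBud _ _ _ _ d _, false => some ⟨_, d⟩
  | impL _ _ _ _ _ e, true | box _ _ _ _ _ e, true => some ⟨_, e⟩
  | boxBud .., true => some ⟨H, root⟩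
  | _, _ => none

def graph (root : Deriv H H) : ProofGraph (Σ S, Deriv H S) where
  label t := (t.2.rule, t.1)
  child t := Deriv.child root t.2
  valid := by
    rintro ⟨S, d⟩
    cases d with
    | boxBud Γ Δ A P _ hH => exact hH ▸ Inst.box Γ Δ A P
    | _ => constructor
  rank t := t.2.size
  rank_lt := by
    rintro ⟨S, d⟩ (_ | _) u hu <;> cases d <;>
      simp only [child, Option.some.injEq, reduceCtorEq] at hu <;> subst hu <;> simp [rule, size]

theorem exists_noCut_proves {S : Sequent} (root : Deriv S S) :
    ∃ π : InfProof, NoCut π ∧ Proves π S :=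
  ⟨(graph root).unfold ⟨S, root⟩,
    (graph root).noCut_unfold (fun ⟨_, d⟩ => by cases d <;> simp [graph, rule]) _,
    (graph root).unfold_proves _⟩

def ident : (C : Formula) → (Γ Δ : Multiset Formula) → Deriv H (C ::ₘ Γ, C ::ₘ Δ)
  | .bot, Γ, Δ => axBot Γ _
  | .atom p, Γ, Δ => ax Γ Δ p
  | .imp D E, Γ, Δ => by
      refine impR _ Δ D E ?_
      rw [Multiset.cons_swap]
      exact impL (D ::ₘ Γ) (E ::ₘ Δ) D E (ident E (D ::ₘ Γ) Δ) (ident D Γ (E ::ₘ Δ))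
  | .box D, Γ, Δ => by
      have hΓ : Γ + boxed {D} = D.box ::ₘ Γ := by
        rw [boxed, Multiset.map_singleton, add_comm, Multiset.singleton_add]
      rw [← hΓ]
      refine box Γ Δ D {D} ?_ (refl 0 {D} D (ident D {D.box} 0))
      rw [hΓ]
      exact refl Γ (D ::ₘ Δ) D (ident D (D.box ::ₘ Γ) Δ)

end Deriv

def grzCycle (A : Formula) :
    Deriv ({Formula.box (Formula.imp (Formula.box (Formula.imp A (Formula.box A))) A)}, {A})
      ({Formula.box (Formula.imp (Formula.box (Formula.imp A (Formula.box A))) A)}, {A}) := by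
  set B := Formula.imp A (Formula.box A)
  set G := Formula.imp (Formula.box B) A
  have hG : boxed {G} = {Formula.box G} := Multiset.map_singleton _ _
  have imp_step (Δ : Multiset Formula) :
      Deriv ({Formula.box G}, {A}) ({Formula.box G}, B ::ₘ Δ) := by
    refine Deriv.impR _ Δ A (Formula.box A) ?_
    have hctx : A ::ₘ {Formula.box G} = {A} + boxed {G} := by rw [hG, Multiset.singleton_add]
    rw [hctx]
    exact Deriv.boxBud {A} Δ A {G} (hctx ▸ Deriv.ident A {Formula.box G} Δ) (by rw [hG])
  refine Deriv.refl 0 {A} G (Deriv.impL {Formula.box G} {A} (Formula.box B) A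
    (Deriv.ident A {Formula.box G} 0) ?_)
  have hctx : 0 + boxed {G} = {Formula.box G} := by rw [hG, zero_add]
  rw [← hctx]
  exact Deriv.box 0 {A} B {G} (hctx ▸ imp_step {A}) (hG ▸ imp_step 0)

/-- □(□(A → □A) → A) ⇒ A is provable in the cut-free calculus Grz∞. -/
theorem grz_axiom_provable (A : Formula) :
    ∃ π : InfProof, NoCut π ∧
      Proves π ({Formula.box (Formula.imp (Formula.box (Formula.imp A (Formula.box A))) A)},
        {A}) :=
  (grzCycle A).exists_noCut_proves
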